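/- arXiv:1801.07467 — 3 statements merged into one kernel-verified Lean document; each statement's English description precedes it below -/
import Mathlib

section
/- Let A_0, …, A_k ⊆ ℤ^n be full-dimensional configurations and B_0, …, B_r ⊆ ℤ^{n+k−r} nonempty configurations such that A_0 * … * A_k ≅ B_0 * … * B_r as configurations in ℤ^{n+k}. Then dim(B_i) ≥ min(k, n) for all i ∈ {0, …, r}. -/
open scoped Pointwise

/-- The lattice `ℤ^n`. -/
abbrev ZLat (n : ℕ) := Fin n → ℤ

/-- Inclusion of `ℤ^n` into `ℝ^n`. -/
def toR {n : ℕ} (v : ZLat n) : Fin n → ℝ := fun i => (v i : ℝ)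

/-- The dimension of a configuration: the dimension of its affine hull in `ℝ^n`. -/
noncomputable def confDim {n : ℕ} (A : Finset (ZLat n)) : ℕ :=
  Module.finrank ℝ (affineSpan ℝ (toR '' (A : Set (ZLat n)))).direction

/-- `cayleyE k i` is `e_i ∈ ℤ^k`, where `e_0 = 0` and `e_1, …, e_k` are the
standard basis vectors. -/
def cayleyE (k : ℕ) (i : Fin (k + 1)) : ZLat k :=
  fun j => if (j : ℕ) + 1 = (i : ℕ) then 1 else 0

/-- The Cayley sum `A_0 * ⋯ * A_k ⊆ ℤ^{n+k}` of configurations `A_0, …, A_k ⊆ ℤ^n`. -/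
def cayley {n k : ℕ} (A : Fin (k + 1) → Finset (ZLat n)) : Finset (ZLat (n + k)) :=
  Finset.univ.biUnion fun i => (A i).image fun a => Fin.append a (cayleyE k i)

/-- The vertex set `Δ_k = {e_0, e_1, …, e_k} ⊆ ℤ^k` of the standard unimodular simplex. -/
def stdSimplexConfig (k : ℕ) : Finset (ZLat k) := Finset.univ.image (cayleyE k)

/-- The subgroup `⟨A - A⟩ ⊆ ℤ^n` generated by all differences of elements of `A`. -/
def diffSpan {n : ℕ} (A : Finset (ZLat n)) : AddSubgroup (ZLat n) :=
  AddSubgroup.closure {d | ∃ a ∈ A, ∃ b ∈ A, d = a - b}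

/-- A family `A_0, …, A_k ⊆ ℤ^n` is spanning if `⟨A_0-A_0⟩ + ⋯ + ⟨A_k-A_k⟩ = ℤ^n`. -/
def IsSpanningFamily {n k : ℕ} (A : Fin (k + 1) → Finset (ZLat n)) : Prop :=
  (⨆ i, diffSpan (A i)) = ⊤

/-- The Cayley sum of `A_0, …, A_k` is of join type if the natural homomorphism
`⟨A_0-A_0⟩ ⊕ ⋯ ⊕ ⟨A_k-A_k⟩ → ℤ^n`, `(a_0, …, a_k) ↦ a_0 + ⋯ + a_k`, is injective. -/
def JoinType {n k : ℕ} (A : Fin (k + 1) → Finset (ZLat n)) : Prop :=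
  ∀ d : Fin (k + 1) → ZLat n, (∀ i, d i ∈ diffSpan (A i)) → ∑ i, d i = 0 → ∀ i, d i = 0

/-- The lattice points of the affine hull of `A`, i.e. `aff(A) ∩ ℤ^n`. -/
def affLat {n : ℕ} (A : Finset (ZLat n)) : Set (ZLat n) :=
  {x | toR x ∈ affineSpan ℝ (toR '' (A : Set (ZLat n)))}

/-- Two configurations `A ⊆ ℤ^n`, `B ⊆ ℤ^m` are isomorphic if there is an affine
lattice isomorphism `aff(A) ∩ ℤ^n → aff(B) ∩ ℤ^m` mapping `A` onto `B`. -/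
def ConfigIso {n m : ℕ} (A : Finset (ZLat n)) (B : Finset (ZLat m)) : Prop :=
  ∃ f : ZLat n → ZLat m, ∃ g : ZLat m → ZLat n,
    (∀ x ∈ affLat A, f x ∈ affLat B) ∧
    (∀ y ∈ affLat B, g y ∈ affLat A) ∧
    (∀ x ∈ affLat A, g (f x) = x) ∧
    (∀ y ∈ affLat B, f (g y) = y) ∧
    (∀ x y z, x ∈ affLat A → y ∈ affLat A → z ∈ affLat A →
      f (x + y - z) = f x + f y - f z) ∧
    f '' (A : Set (ZLat n)) = (B : Set (ZLat m))

/-- `F` is a face of the configuration `A`: the intersection of a face of the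
polytope `conv(A)` with `A` (the empty face and `A` itself are allowed). -/
def IsFaceOf {n : ℕ} (F A : Finset (ZLat n)) : Prop :=
  F = ∅ ∨ (F ⊆ A ∧ ∃ l : (Fin n → ℝ) →ₗ[ℝ] ℝ,
    (F : Set (ZLat n)) = {x ∈ (A : Set (ZLat n)) | ∀ y ∈ A, l (toR y) ≤ l (toR x)})

/-- Faces `F_0, …, F_k` of `A` covering `A` form a Cayley decomposition of `A` if
there is a lattice projection `π : ℤ^n → ℤ^k` with `π(F_i) ⊆ {e_i}` for all `i`. -/
def IsCayleyDecomp {n k : ℕ} (A : Finset (ZLat n)) (F : Fin (k + 1) → Finset (ZLat n)) : Prop :=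
  (∀ i, IsFaceOf (F i) A) ∧ (∀ a ∈ A, ∃ i, a ∈ F i) ∧
    ∃ π : ZLat n →+ ZLat k, Function.Surjective π ∧ ∀ i, ∀ x ∈ F i, π x = cayleyE k i

/-- `conv(A)` contains an interior lattice point. -/
def HasIntLatPt {n : ℕ} (A : Finset (ZLat n)) : Prop :=
  ∃ x : ZLat n, toR x ∈ interior (convexHull ℝ (toR '' (A : Set (ZLat n))))

/-- The dilate `c · conv(A)` contains an interior lattice point. -/
def HasIntLatPtDilate {n : ℕ} (c : ℕ) (A : Finset (ZLat n)) : Prop :=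
  ∃ x : ZLat n, toR x ∈ interior ((c : ℝ) • convexHull ℝ (toR '' (A : Set (ZLat n))))

/-- The codegree of the lattice polytope `conv(A)`: the smallest `c ≥ 1` such that
`c · conv(A)` has an interior lattice point. -/
noncomputable def codeg {n : ℕ} (A : Finset (ZLat n)) : ℕ :=
  sInf {c : ℕ | 1 ≤ c ∧ HasIntLatPtDilate c A}


/-!
Since every `A_j` is full-dimensional, `A_0 * ⋯ * A_k` affinely spans `ℤ^{n+k}`, so the
isomorphism is a globally defined injective affine map `f`, and its real extension preserves
dimensions. Fix `i` and let `T = B_i × {e_i}`. If every summand `A_j × {e_j}` has a point mapped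
into `T`, these `k + 1` points span a `k`-simplex inside `f⁻¹(T)`. Otherwise the `i`-th
barycentric coordinate of the Cayley label of `f`, an affine function on `ℝ^{n+k}`, is the
indicator of `f⁻¹(T)` on the Cayley sum and vanishes on a full-dimensional summand. It is
therefore constant along `ℝ^n × {0}`, so the whole summand containing a preimage of a point of
`T` is mapped into `T`, which gives `dim B_i ≥ n`.
-/

open Function Matrix

section RealExtension

variable {a b : ℕ}

lemma Matrix.mulVec_map_intCast_injective {ι : Type*} [Fintype ι] {M : Matrix (Fin b) ι ℤ}
    (hM : Injective M.mulVec) : Injective (M.map ((↑) : ℤ → ℝ)).mulVec := by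
  rw [Matrix.mulVec_injective_iff] at hM ⊢
  exact (linearIndependent_algebraMap_comp_iff (R := ℤ) (S := ℝ) (v := M.col)).mpr hM

lemma exists_linearMap_toR (h : ZLat a →+ ZLat b) :
    ∃ L : (Fin a → ℝ) →ₗ[ℝ] (Fin b → ℝ),
      (∀ x, toR (h x) = L (toR x)) ∧ (Injective h → Injective L) := by
  set M := LinearMap.toMatrix' h.toIntLinearMap
  have hM : ∀ x, M *ᵥ x = h x := LinearMap.toMatrix'_mulVec h.toIntLinearMap
  refine ⟨(M.map ((↑) : ℤ → ℝ)).mulVecLin, fun x => ?_, fun hinj => ?_⟩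
  · funext i
    exact hM x ▸ RingHom.map_mulVec (Int.castRingHom ℝ) M x i
  · exact Matrix.mulVec_map_intCast_injective fun x y hxy => hinj (by simpa [hM] using hxy)

lemma exists_affineMap_toR (f : ZLat a → ZLat b)
    (haff : ∀ x y z, f (x + y - z) = f x + f y - f z) :
    ∃ F : (Fin a → ℝ) →ᵃ[ℝ] (Fin b → ℝ),
      (∀ x, toR (f x) = F (toR x)) ∧ (Injective f → Injective F.linear) := by
  let h : ZLat a →+ ZLat b := AddMonoidHom.mk' (fun x => f x - f 0) fun x y => by
    rw [← sub_zero (x + y), haff]; abel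
  obtain ⟨L, hL, hLinj⟩ := exists_linearMap_toR h
  refine ⟨L.toAffineMap + AffineMap.const ℝ _ (toR (f 0)), fun x => ?_, fun hinj => ?_⟩
  · funext i
    simp only [AddMonoidHom.mk'_apply, h] at hL
    simp [toR, ← hL x]
  · simpa using hLinj fun x y hxy => hinj (sub_left_injective hxy)

end RealExtension

section ConfDim

variable {a b : ℕ}

lemma confDim_eq_finrank_vectorSpan (S : Finset (ZLat a)) :
    confDim S = Module.finrank ℝ (vectorSpan ℝ (toR '' (S : Set (ZLat a)))) := by
  rw [confDim, direction_affineSpan]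

lemma confDim_mono {S T : Finset (ZLat a)} (h : S ⊆ T) : confDim S ≤ confDim T := by
  simp only [confDim_eq_finrank_vectorSpan]
  exact Submodule.finrank_mono (vectorSpan_mono ℝ (Set.image_mono (Finset.coe_subset.mpr h)))

lemma vectorSpan_eq_top_of_confDim_eq {S : Finset (ZLat a)} (h : confDim S = a) :
    vectorSpan ℝ (toR '' (S : Set (ZLat a))) = ⊤ := by
  apply Submodule.eq_top_of_finrank_eq
  rw [← confDim_eq_finrank_vectorSpan, h, Module.finrank_fin_fun]

lemma nonempty_of_confDim_pos {S : Finset (ZLat a)} (h : 0 < confDim S) : S.Nonempty := by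
  rw [Finset.nonempty_iff_ne_empty]
  rintro rfl
  rw [confDim_eq_finrank_vectorSpan, Finset.coe_empty, Set.image_empty, vectorSpan_empty,
    finrank_bot] at h
  exact h.false

lemma vectorSpan_toR_image {f : ZLat a → ZLat b} {F : (Fin a → ℝ) →ᵃ[ℝ] (Fin b → ℝ)}
    {S : Finset (ZLat a)} (hF : ∀ x ∈ S, toR (f x) = F (toR x)) :
    vectorSpan ℝ (toR '' (S.image f : Set (ZLat b))) =
      (vectorSpan ℝ (toR '' (S : Set (ZLat a)))).map F.linear := by
  rw [AffineMap.map_vectorSpan, Finset.coe_image, Set.image_image, Set.image_image]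
  exact congrArg _ (Set.image_congr hF)

lemma confDim_image_le {f : ZLat a → ZLat b} {F : (Fin a → ℝ) →ᵃ[ℝ] (Fin b → ℝ)}
    {S : Finset (ZLat a)} (hF : ∀ x ∈ S, toR (f x) = F (toR x)) :
    confDim (S.image f) ≤ confDim S := by
  rw [confDim_eq_finrank_vectorSpan, confDim_eq_finrank_vectorSpan, vectorSpan_toR_image hF]
  exact Submodule.finrank_map_le _ _

lemma confDim_image_eq {f : ZLat a → ZLat b} {F : (Fin a → ℝ) →ᵃ[ℝ] (Fin b → ℝ)}
    {S : Finset (ZLat a)} (hF : ∀ x ∈ S, toR (f x) = F (toR x)) (hinj : Injective F.linear) :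
    confDim (S.image f) = confDim S := by
  rw [confDim_eq_finrank_vectorSpan, confDim_eq_finrank_vectorSpan, vectorSpan_toR_image hF]
  exact (Submodule.equivMapOfInjective _ hinj _).finrank_eq.symm

end ConfDim

section Append

variable {m n : ℕ}

lemma toR_append (x : ZLat m) (y : ZLat n) :
    toR (Fin.append x y) = Fin.append (toR x) (toR y) := by
  funext j
  refine Fin.addCases (fun t => ?_) (fun t => ?_) j <;> simp [toR]

lemma append_add_append {M : Type*} [Add M] (x x' : Fin m → M) (y y' : Fin n → M) :
    Fin.append x y + Fin.append x' y' = Fin.append (x + x') (y + y') := by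
  funext j
  refine Fin.addCases (fun t => ?_) (fun t => ?_) j <;> simp

def appendZero (m n : ℕ) : (Fin m → ℝ) →ₗ[ℝ] (Fin (m + n) → ℝ) where
  toFun w := Fin.append w 0
  map_add' u v := by rw [append_add_append, add_zero]
  map_smul' c u := by
    funext j
    refine Fin.addCases (fun t => ?_) (fun t => ?_) j <;> simp

@[simp]
lemma appendZero_apply (w : Fin m → ℝ) : appendZero m n w = Fin.append w 0 := rfl

lemma appendZero_injective : Injective (appendZero m n) := fun u v h => by
  funext t
  simpa using congrFun h (Fin.castAdd n t)

lemma ker_funLeft_natAdd_le_range_appendZero :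
    LinearMap.ker (LinearMap.funLeft ℝ ℝ (Fin.natAdd m : Fin n → Fin (m + n))) ≤
      LinearMap.range (appendZero m n) := by
  intro w hw
  refine ⟨fun t => w (Fin.castAdd n t), ?_⟩
  rw [appendZero_apply]
  conv_rhs => rw [← Fin.append_castAdd_natAdd (f := w)]
  exact congrArg _ hw.symm

def appendAffine (c : Fin n → ℝ) : (Fin m → ℝ) →ᵃ[ℝ] (Fin (m + n) → ℝ) :=
  (appendZero m n).toAffineMap + AffineMap.const ℝ _ (Fin.append 0 c)

@[simp]
lemma appendAffine_apply (c : Fin n → ℝ) (w : Fin m → ℝ) : appendAffine c w = Fin.append w c := by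
  simp [appendAffine, append_add_append]

@[simp]
lemma appendAffine_linear (c : Fin n → ℝ) :
    (appendAffine c : (Fin m → ℝ) →ᵃ[ℝ] _).linear = appendZero m n := by
  simp [appendAffine]

end Append

section Cayley

variable {m n k r : ℕ}

lemma Fin.append_comp_natAdd {α : Type*} (x : Fin m → α) (y : Fin n → α) :
    Fin.append x y ∘ Fin.natAdd m = y :=
  funext (Fin.append_right x y)

lemma cayleyE_zero (k : ℕ) : cayleyE k 0 = 0 := by
  funext j
  simp [cayleyE]

lemma cayleyE_succ (t : Fin k) : cayleyE k t.succ = Pi.single t 1 := by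
  funext j
  simp [cayleyE, Pi.single_apply, Fin.ext_iff]

lemma cayleyE_injective : Injective (cayleyE k) := by
  intro i i' h
  cases i using Fin.cases with
  | zero => cases i' using Fin.cases with
    | zero => rfl
    | succ t => simpa [cayleyE_zero, cayleyE_succ] using congrFun h t
  | succ t => cases i' using Fin.cases with
    | zero => simpa [cayleyE_zero, cayleyE_succ] using congrFun h t
    | succ t' => simpa [cayleyE_succ, Pi.single_apply] using congrFun h t

lemma toR_cayleyE_zero (k : ℕ) : toR (cayleyE k 0) = 0 := by
  funext j
  simp [cayleyE_zero, toR]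

lemma toR_cayleyE_succ (t : Fin k) : toR (cayleyE k t.succ) = Pi.single t 1 := by
  funext j
  simp [cayleyE_succ, toR, Pi.single_apply]

lemma vectorSpan_stdSimplexConfig :
    vectorSpan ℝ (toR '' (stdSimplexConfig k : Set (ZLat k))) = ⊤ := by
  rw [eq_top_iff, ← (Pi.basisFun ℝ (Fin k)).span_eq, Submodule.span_le]
  rintro _ ⟨t, rfl⟩
  have h : ∀ i, toR (cayleyE k i) ∈ toR '' (stdSimplexConfig k : Set (ZLat k)) :=
    fun i => ⟨_, by simp [stdSimplexConfig], rfl⟩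
  simpa [toR_cayleyE_succ, toR_cayleyE_zero] using vsub_mem_vectorSpan ℝ (h t.succ) (h 0)

lemma confDim_stdSimplexConfig : confDim (stdSimplexConfig k) = k := by
  rw [confDim_eq_finrank_vectorSpan, vectorSpan_stdSimplexConfig, finrank_top,
    Module.finrank_fin_fun]

def cayleySlice (A : Fin (k + 1) → Finset (ZLat n)) (j : Fin (k + 1)) : Finset (ZLat (n + k)) :=
  (A j).image fun a => Fin.append a (cayleyE k j)

lemma mem_cayley {A : Fin (k + 1) → Finset (ZLat n)} {x : ZLat (n + k)} :
    x ∈ cayley A ↔ ∃ j, x ∈ cayleySlice A j := by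
  simp [cayley, cayleySlice]

lemma cayleySlice_subset_cayley (A : Fin (k + 1) → Finset (ZLat n)) (j : Fin (k + 1)) :
    cayleySlice A j ⊆ cayley A :=
  fun _ hx => mem_cayley.mpr ⟨j, hx⟩

lemma toR_append_cayleyE (j : Fin (k + 1)) (a : ZLat n) :
    toR (Fin.append a (cayleyE k j)) = appendAffine (toR (cayleyE k j)) (toR a) := by
  rw [toR_append, appendAffine_apply]

lemma vectorSpan_cayleySlice (A : Fin (k + 1) → Finset (ZLat n)) (j : Fin (k + 1)) :
    vectorSpan ℝ (toR '' (cayleySlice A j : Set (ZLat (n + k)))) =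
      (vectorSpan ℝ (toR '' (A j : Set (ZLat n)))).map (appendZero n k) := by
  rw [cayleySlice, vectorSpan_toR_image fun a _ => toR_append_cayleyE j a, appendAffine_linear]

lemma confDim_cayleySlice (A : Fin (k + 1) → Finset (ZLat n)) (j : Fin (k + 1)) :
    confDim (cayleySlice A j) = confDim (A j) :=
  confDim_image_eq (fun a _ => toR_append_cayleyE j a)
    (by rw [appendAffine_linear]; exact appendZero_injective)

lemma le_confDim_image_append_cayleyE (a : Fin (k + 1) → ZLat n) :
    k ≤ confDim (Finset.univ.image fun j => Fin.append (a j) (cayleyE k j)) := by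
  have h : (Finset.univ.image fun j => Fin.append (a j) (cayleyE k j)).image
      (· ∘ Fin.natAdd n) = stdSimplexConfig k := by
    rw [Finset.image_image, stdSimplexConfig]
    congr 1
    funext j
    exact Fin.append_comp_natAdd _ _
  calc k = confDim (stdSimplexConfig k) := confDim_stdSimplexConfig.symm
    _ ≤ _ := h ▸ confDim_image_le (F := (LinearMap.funLeft ℝ ℝ (Fin.natAdd n)).toAffineMap)
      fun _ _ => rfl

lemma vectorSpan_cayley_eq_top {A : Fin (k + 1) → Finset (ZLat n)} (j₀ : Fin (k + 1))
    (hA : vectorSpan ℝ (toR '' (A j₀ : Set (ZLat n))) = ⊤) (hne : ∀ j, (A j).Nonempty) :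
    vectorSpan ℝ (toR '' (cayley A : Set (ZLat (n + k)))) = ⊤ := by
  set D := vectorSpan ℝ (toR '' (cayley A : Set (ZLat (n + k))))
  set π := LinearMap.funLeft ℝ ℝ (Fin.natAdd n : Fin k → Fin (n + k))
  have hker : LinearMap.ker π ≤ D := calc
    LinearMap.ker π ≤ LinearMap.range (appendZero n k) := ker_funLeft_natAdd_le_range_appendZero
    _ = vectorSpan ℝ (toR '' (cayleySlice A j₀ : Set (ZLat (n + k)))) := by
      rw [vectorSpan_cayleySlice, hA, Submodule.map_top]
    _ ≤ D := vectorSpan_mono ℝ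
      (Set.image_mono (Finset.coe_subset.mpr (cayleySlice_subset_cayley A j₀)))
  have hmap : D.map π = ⊤ := by
    rw [eq_top_iff, ← vectorSpan_stdSimplexConfig]
    rw [← LinearMap.toAffineMap_linear π, AffineMap.map_vectorSpan]
    apply vectorSpan_mono
    rintro _ ⟨e, he, rfl⟩
    obtain ⟨j, -, rfl⟩ := Finset.mem_image.mp he
    obtain ⟨a, ha⟩ := hne j
    refine ⟨toR (Fin.append a (cayleyE k j)),
      ⟨_, cayleySlice_subset_cayley A j (Finset.mem_image_of_mem _ ha), rfl⟩, ?_⟩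
    funext t
    simp [π, toR]
  rw [← sup_eq_left.mpr hker, ← Submodule.comap_map_eq, hmap, Submodule.comap_top]

lemma affineSpan_cayley_eq_top {A : Fin (k + 1) → Finset (ZLat n)} (j₀ : Fin (k + 1))
    (hA : vectorSpan ℝ (toR '' (A j₀ : Set (ZLat n))) = ⊤) (hne : ∀ j, (A j).Nonempty) :
    affineSpan ℝ (toR '' (cayley A : Set (ZLat (n + k)))) = ⊤ := by
  obtain ⟨a, ha⟩ := hne j₀
  have hmem : Fin.append a (cayleyE k j₀) ∈ cayley A :=
    cayleySlice_subset_cayley A j₀ (Finset.mem_image_of_mem _ ha)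
  rw [AffineSubspace.affineSpan_eq_top_iff_vectorSpan_eq_top_of_nonempty ℝ _ _
    (Set.Nonempty.image toR ⟨_, hmem⟩)]
  exact vectorSpan_cayley_eq_top j₀ hA hne

def baryCoord (i : Fin (r + 1)) : (Fin r → ℝ) →ᵃ[ℝ] ℝ :=
  Fin.cases (AffineMap.const ℝ _ 1 - (∑ t, LinearMap.proj t).toAffineMap)
    (fun t => (LinearMap.proj t).toAffineMap) i

lemma baryCoord_toR_cayleyE (i i' : Fin (r + 1)) :
    baryCoord i (toR (cayleyE r i')) = if i' = i then 1 else 0 := by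
  cases i using Fin.cases <;> cases i' using Fin.cases <;>
    simp [baryCoord, toR_cayleyE_zero, toR_cayleyE_succ, Pi.single_apply, eq_comm]

lemma baryCoord_toR_comp_natAdd {B : Fin (r + 1) → Finset (ZLat m)} {y : ZLat (m + r)}
    (hy : y ∈ cayley B) (i : Fin (r + 1)) :
    baryCoord i (toR (y ∘ Fin.natAdd m)) = if y ∈ cayleySlice B i then 1 else 0 := by
  obtain ⟨i', hy'⟩ := mem_cayley.mp hy
  obtain ⟨b, -, rfl⟩ := Finset.mem_image.mp hy'
  rw [Fin.append_comp_natAdd, baryCoord_toR_cayleyE]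
  refine if_congr ⟨?_, fun h => ?_⟩ rfl rfl
  · rintro rfl
    exact hy'
  · obtain ⟨b', -, hb'⟩ := Finset.mem_image.mp h
    have := congrArg (· ∘ Fin.natAdd m) hb'
    simp only [Fin.append_comp_natAdd] at this
    exact cayleyE_injective this.symm

end Cayley

lemma AffineMap.apply_eq_apply_of_vectorSpan_le {𝕜 V₁ P₁ V₂ P₂ : Type*} [Ring 𝕜]
    [AddCommGroup V₁] [Module 𝕜 V₁] [AddTorsor V₁ P₁] [AddCommGroup V₂] [Module 𝕜 V₂]
    [AddTorsor V₂ P₂] (Θ : P₁ →ᵃ[𝕜] P₂) {S S' : Set P₁} (hS : ∀ p ∈ S, ∀ q ∈ S, Θ p = Θ q)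
    (hle : vectorSpan 𝕜 S' ≤ vectorSpan 𝕜 S) {x y : P₁} (hx : x ∈ S') (hy : y ∈ S') :
    Θ x = Θ y := by
  have hker : vectorSpan 𝕜 S ≤ LinearMap.ker Θ.linear := by
    rw [vectorSpan_def, Submodule.span_le]
    rintro _ ⟨p, hp, q, hq, rfl⟩
    simp [AffineMap.linearMap_vsub, hS p hp q hq]
  rw [← vsub_eq_zero_iff_eq, ← Θ.linearMap_vsub]
  exact hker (hle (vsub_mem_vectorSpan 𝕜 hx hy))

lemma ConfigIso.exists_affine_injective {a b : ℕ} {S : Finset (ZLat a)} {S' : Finset (ZLat b)}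
    (hiso : ConfigIso S S') (hS : affineSpan ℝ (toR '' (S : Set (ZLat a))) = ⊤) :
    ∃ f : ZLat a → ZLat b, (∀ x y z, f (x + y - z) = f x + f y - f z) ∧ Injective f ∧
      f '' S = S' := by
  obtain ⟨f, g, -, -, hgf, -, haff, himg⟩ := hiso
  have hlat : ∀ x, x ∈ affLat S := fun x => by
    show toR x ∈ affineSpan ℝ (toR '' (S : Set (ZLat a)))
    rw [hS]
    trivial
  exact ⟨f, fun x y z => haff x y z (hlat x) (hlat y) (hlat z),
    LeftInverse.injective fun x => hgf x (hlat x), himg⟩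

section CayleyIso

variable {m n k r : ℕ} {A : Fin (k + 1) → Finset (ZLat n)} {B : Fin (r + 1) → Finset (ZLat m)}

lemma exists_cayleySlice_mapsTo {f : ZLat (n + k) → ZLat (m + r)}
    {F : (Fin (n + k) → ℝ) →ᵃ[ℝ] (Fin (m + r) → ℝ)} (hF : ∀ x, toR (f x) = F (toR x))
    (himg : f '' cayley A = cayley B) {i : Fin (r + 1)} (hBi : (B i).Nonempty)
    {j : Fin (k + 1)} (hAj : vectorSpan ℝ (toR '' (A j : Set (ZLat n))) = ⊤)
    (hj : ∀ x ∈ cayleySlice A j, f x ∉ cayleySlice B i) :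
    ∃ j', ∀ x ∈ cayleySlice A j', f x ∈ cayleySlice B i := by
  set Θ := (baryCoord i).comp ((LinearMap.funLeft ℝ ℝ (Fin.natAdd m)).toAffineMap.comp F)
  have hΘ : ∀ x ∈ cayley A, Θ (toR x) = if f x ∈ cayleySlice B i then 1 else 0 := by
    intro x hx
    have hfx : f x ∈ (cayley B : Set (ZLat (m + r))) := himg ▸ Set.mem_image_of_mem f hx
    rw [← baryCoord_toR_comp_natAdd hfx]
    simp only [Θ, AffineMap.comp_apply, LinearMap.coe_toAffineMap, ← hF]
    rfl
  obtain ⟨b, hb⟩ := hBi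
  have hb' : Fin.append b (cayleyE r i) ∈ f '' cayley A :=
    himg ▸ cayleySlice_subset_cayley B i (Finset.mem_image_of_mem _ hb)
  obtain ⟨x₀, hx₀, hfx₀⟩ := hb'
  obtain ⟨j', hx₀j'⟩ := mem_cayley.mp hx₀
  refine ⟨j', fun x hx => by_contra fun hfx => ?_⟩
  have hconst : Θ (toR x) = Θ (toR x₀) := by
    refine Θ.apply_eq_apply_of_vectorSpan_le (S := toR '' (cayleySlice A j : Set (ZLat (n + k))))
      ?_ ?_ (Set.mem_image_of_mem toR hx) (Set.mem_image_of_mem toR hx₀j')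
    · rintro _ ⟨p, hp, rfl⟩ _ ⟨q, hq, rfl⟩
      rw [hΘ p (cayleySlice_subset_cayley A j hp), hΘ q (cayleySlice_subset_cayley A j hq),
        if_neg (hj p hp), if_neg (hj q hq)]
    · rw [vectorSpan_cayleySlice, vectorSpan_cayleySlice, hAj]
      exact Submodule.map_mono le_top
  rw [hΘ x (cayleySlice_subset_cayley A j' hx), hΘ x₀ hx₀, if_neg hfx, hfx₀,
    if_pos (show _ ∈ cayleySlice B i from Finset.mem_image_of_mem _ hb)] at hconst
  exact zero_ne_one hconst

end CayleyIso

theorem cayley_summand_dim_ge_min_general {n k r : ℕ}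
    (A : Fin (k + 1) → Finset (ZLat n)) (hfull : ∀ i, confDim (A i) = n)
    (B : Fin (r + 1) → Finset (ZLat (n + k - r))) (hB : ∀ i, (B i).Nonempty)
    (hiso : ConfigIso (cayley A) (cayley B)) :
    ∀ i, min k n ≤ confDim (B i) := by
  intro i
  rcases Nat.eq_zero_or_pos n with hn | hn
  · simp [hn]
  have hA : ∀ j, vectorSpan ℝ (toR '' (A j : Set (ZLat n))) = ⊤ :=
    fun j => vectorSpan_eq_top_of_confDim_eq (hfull j)
  have hAne : ∀ j, (A j).Nonempty := fun j => nonempty_of_confDim_pos (by rwa [hfull j])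
  obtain ⟨f, haff, hf, himg⟩ :=
    hiso.exists_affine_injective (affineSpan_cayley_eq_top 0 (hA 0) hAne)
  obtain ⟨F, hF, hFinj⟩ := exists_affineMap_toR f haff
  have hdim : ∀ S : Finset (ZLat (n + k)), (∀ x ∈ S, f x ∈ cayleySlice B i) →
      confDim S ≤ confDim (B i) := fun S hS =>
    calc confDim S = confDim (S.image f) := (confDim_image_eq (fun x _ => hF x) (hFinj hf)).symm
      _ ≤ confDim (cayleySlice B i) := confDim_mono (Finset.image_subset_iff.mpr hS)
      _ = confDim (B i) := confDim_cayleySlice B i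
  by_cases hmeet : ∀ j, ∃ a ∈ A j, f (Fin.append a (cayleyE k j)) ∈ cayleySlice B i
  · choose a _ hfa using hmeet
    exact (min_le_left k n).trans
      ((le_confDim_image_append_cayleyE a).trans (hdim _ (by simpa using hfa)))
  · push Not at hmeet
    obtain ⟨j, hj⟩ := hmeet
    obtain ⟨j', hj'⟩ := exists_cayleySlice_mapsTo hF himg (hB i) (hA j)
      (by simpa [cayleySlice] using hj)
    calc min k n ≤ confDim (A j') := (min_le_right k n).trans (hfull j').ge
      _ = confDim (cayleySlice A j') := (confDim_cayleySlice A j').symm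
      _ ≤ confDim (B i) := hdim _ hj'

/-- If `A_0, …, A_k ⊆ ℤ^n` are full-dimensional configurations and
`B_0, …, B_r ⊆ ℤ^{n+k-r}` are nonempty configurations with
`A_0 * ⋯ * A_k ≅ B_0 * ⋯ * B_r` in `ℤ^{n+k}`, then `dim(B_i) ≥ min(k, n)` for all `i`. -/
theorem cayley_summand_dim_ge_min {n k r : ℕ} (hr : r ≤ n + k)
    (A : Fin (k + 1) → Finset (ZLat n)) (hfull : ∀ i, confDim (A i) = n)
    (B : Fin (r + 1) → Finset (ZLat (n + k - r))) (hB : ∀ i, (B i).Nonempty)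
    (hiso : ConfigIso (cayley A) (cayley B)) :
    ∀ i, min k n ≤ confDim (B i) :=
  cayley_summand_dim_ge_min_general A hfull B hB hiso
end

section
/- Let A ⊆ ℤ^n be a configuration, let F_0, …, F_k be a Cayley decomposition of A, and let F be an arbitrary face of A. Then F is isomorphic to the Cayley sum (F_0 ∩ F) * … * (F_k ∩ F) (where some of the intersections F_i ∩ F may be empty). In particular, every face of a Cayley sum A_0 * … * A_k is isomorphic to a Cayley sum of (possibly empty) faces of the A_i. -/
open scoped Pointwise

section auxCayley
variable {n k : ℕ}

lemma toR_inj {x y : ZLat n} (h : toR x = toR y) : x = y := by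
  funext j
  have := congrFun h j
  simpa [toR] using this

lemma pi_eq_sum (π : ZLat n →+ ZLat k) (x : ZLat n) :
    π x = ∑ i, x i • π (Pi.single i 1) := by
  conv_lhs => rw [← Finset.univ_sum_single x, map_sum]
  refine Finset.sum_congr rfl fun i _ => ?_
  rw [← map_zsmul]
  congr 1
  rw [← Pi.single_smul, smul_eq_mul, mul_one]

noncomputable def piR (π : ZLat n →+ ZLat k) : (Fin n → ℝ) →ₗ[ℝ] (Fin k → ℝ) where
  toFun v := ∑ i, v i • toR (π (Pi.single i 1))
  map_add' a b := by simp [add_smul, Finset.sum_add_distrib]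
  map_smul' c a := by simp [smul_smul, Finset.smul_sum]

lemma piR_toR (π : ZLat n →+ ZLat k) (x : ZLat n) : piR π (toR x) = toR (π x) := by
  rw [pi_eq_sum π x]
  funext j
  simp only [piR, LinearMap.coe_mk, AddHom.coe_mk, toR, Finset.sum_apply, Pi.smul_apply,
    smul_eq_mul]
  push_cast
  ring_nf

lemma append_add {α : Type*} [Add α] (a b : Fin n → α) (c d : Fin k → α) :
    Fin.append (a + b) (c + d) = Fin.append a c + Fin.append b d := by
  funext i
  refine Fin.addCases (fun j => ?_) (fun j => ?_) i <;>
    simp [Fin.append_left, Fin.append_right]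

lemma append_smul (c : ℝ) (a : Fin n → ℝ) (b : Fin k → ℝ) :
    Fin.append (c • a) (c • b) = c • Fin.append a b := by
  funext i
  refine Fin.addCases (fun j => ?_) (fun j => ?_) i <;>
    simp [Fin.append_left, Fin.append_right]

lemma toR_append_s4 (a : ZLat n) (b : ZLat k) :
    toR (Fin.append a b) = Fin.append (toR a) (toR b) := by
  funext i
  refine Fin.addCases (fun j => ?_) (fun j => ?_) i <;>
    simp [toR, Fin.append_left, Fin.append_right]

noncomputable def fR (π : ZLat n →+ ZLat k) : (Fin n → ℝ) →ₗ[ℝ] (Fin (n + k) → ℝ) where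
  toFun v := Fin.append v (piR π v)
  map_add' a b := by
    show Fin.append (a + b) (piR π (a + b)) = _
    rw [map_add, append_add]
  map_smul' c a := by
    show Fin.append (c • a) (piR π (c • a)) = _
    rw [map_smul, RingHom.id_apply, append_smul]

noncomputable def gR : (Fin (n + k) → ℝ) →ₗ[ℝ] (Fin n → ℝ) where
  toFun v := fun j => v (Fin.castAdd k j)
  map_add' a b := rfl
  map_smul' c a := rfl

noncomputable def sndR : (Fin (n + k) → ℝ) →ₗ[ℝ] (Fin k → ℝ) where
  toFun v := fun j => v (Fin.natAdd n j)
  map_add' a b := rfl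
  map_smul' c a := rfl

lemma linmap_mem_span {V W : Type*} [AddCommGroup V] [Module ℝ V] [AddCommGroup W] [Module ℝ W]
    (L : V →ₗ[ℝ] W) (s : Set V) (Q : AffineSubspace ℝ W) (hs : ∀ a ∈ s, L a ∈ Q)
    {x : V} (hx : x ∈ affineSpan ℝ s) : L x ∈ Q := by
  have hle : affineSpan ℝ s ≤ Q.comap L.toAffineMap := by
    rw [affineSpan_le]
    intro a ha
    exact hs a ha
  exact hle hx

lemma mem_cayley_iff (C : Fin (k + 1) → Finset (ZLat n)) (b : ZLat (n + k)) :
    b ∈ cayley C ↔ ∃ i, ∃ a ∈ C i, b = Fin.append a (cayleyE k i) := by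
  simp [cayley, eq_comm]

end auxCayley

/-- If `F_0, …, F_k` is a Cayley decomposition of a configuration
`A ⊆ ℤ^n` and `F` is any face of `A`, then `F ≅ (F_0 ∩ F) * ⋯ * (F_k ∩ F)`
(where some of the intersections may be empty). -/
theorem face_of_cayley_decomposition {n k : ℕ} (A : Finset (ZLat n))
    (F : Fin (k + 1) → Finset (ZLat n)) (hdec : IsCayleyDecomp A F)
    (G : Finset (ZLat n)) (hG : IsFaceOf G A) :
    ConfigIso G (cayley (fun i => F i ∩ G)) := by
  obtain ⟨hface, hcover, π, hπsurj, hπval⟩ := hdec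
  have hGA : ∀ x ∈ G, x ∈ A := by
    rcases hG with h | ⟨h, -⟩
    · intro x hx; simp [h] at hx
    · exact fun x hx => h hx
  set B : Finset (ZLat (n + k)) := cayley (fun i => F i ∩ G) with hB
  -- the maps
  set f : ZLat n → ZLat (n + k) := fun x => Fin.append x (π x) with hf
  set g : ZLat (n + k) → ZLat n := fun y j => y (Fin.castAdd k j) with hg
  -- membership in G gives some i with x ∈ F i ∩ G
  have hidx : ∀ x ∈ G, ∃ i, x ∈ F i ∩ G := by
    intro x hx
    obtain ⟨i, hi⟩ := hcover x (hGA x hx)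
    exact ⟨i, Finset.mem_inter.2 ⟨hi, hx⟩⟩
  have hfB : ∀ x ∈ G, f x ∈ B := by
    intro x hx
    obtain ⟨i, hi⟩ := hidx x hx
    rw [hB, mem_cayley_iff]
    refine ⟨i, x, hi, ?_⟩
    show Fin.append x (π x) = _
    rw [hπval i x (Finset.mem_inter.1 hi).1]
  have hBmem : ∀ b ∈ B, ∃ i, ∃ a ∈ F i ∩ G, b = Fin.append a (cayleyE k i) := by
    intro b hb
    rw [hB, mem_cayley_iff] at hb
    exact hb
  have hg_append : ∀ (a : ZLat n) (c : ZLat k), g (Fin.append a c) = a := by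
    intro a c
    funext j
    simp [hg, Fin.append_left]
  have hgf : ∀ x, g (f x) = x := fun x => hg_append x (π x)
  -- toR compatibilities
  have hfR : ∀ x, toR (f x) = fR π (toR x) := by
    intro x
    rw [hf]
    show toR (Fin.append x (π x)) = Fin.append (toR x) (piR π (toR x))
    rw [piR_toR, toR_append_s4]
  have hgR : ∀ y, toR (g y) = gR (toR y) := fun y => rfl
  -- affLat conditions
  have hcond1 : ∀ x ∈ affLat G, f x ∈ affLat B := by
    intro x hx
    have : fR π (toR x) ∈ affineSpan ℝ (toR '' (B : Set (ZLat (n + k)))) := by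
      refine linmap_mem_span (fR π) _ _ ?_ hx
      rintro - ⟨a, ha, rfl⟩
      rw [← hfR]
      exact subset_affineSpan ℝ _ ⟨f a, hfB a ha, rfl⟩
    rwa [affLat, Set.mem_setOf_eq, hfR]
  have hgB : ∀ b ∈ B, g b ∈ G ∧ toR (g b) ∈ toR '' (G : Set (ZLat n)) := by
    intro b hb
    obtain ⟨i, a, ha, rfl⟩ := hBmem b hb
    rw [hg_append]
    exact ⟨(Finset.mem_inter.1 ha).2, ⟨a, (Finset.mem_inter.1 ha).2, rfl⟩⟩
  have hcond2 : ∀ y ∈ affLat B, g y ∈ affLat G := by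
    intro y hy
    have : gR (toR y) ∈ affineSpan ℝ (toR '' (G : Set (ZLat n))) := by
      refine linmap_mem_span gR _ _ ?_ hy
      rintro - ⟨b, hb, rfl⟩
      rw [← hgR]
      exact subset_affineSpan ℝ _ (hgB b hb).2
    rwa [affLat, Set.mem_setOf_eq, hgR]
  -- f ∘ g = id on affLat B
  set L : (Fin (n + k) → ℝ) →ₗ[ℝ] (Fin k → ℝ) := (piR π).comp gR - sndR with hL
  have hLB : ∀ y ∈ affLat B, L (toR y) = 0 := by
    intro y hy
    have hmem : L (toR y) ∈ (⊥ : Submodule ℝ (Fin k → ℝ)).toAffineSubspace := by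
      refine linmap_mem_span L _ _ ?_ hy
      rintro - ⟨b, hb, rfl⟩
      obtain ⟨i, a, ha, rfl⟩ := hBmem b hb
      rw [Submodule.mem_toAffineSubspace, Submodule.mem_bot, hL, LinearMap.sub_apply,
        LinearMap.comp_apply]
      have h1 : gR (toR (Fin.append a (cayleyE k i))) = toR a := by
        rw [← hgR, hg_append]
      have h2 : sndR (toR (Fin.append a (cayleyE k i))) = toR (cayleyE k i) := by
        funext j
        simp [sndR, toR_append_s4, Fin.append_right]
      rw [h1, h2, piR_toR, hπval i a (Finset.mem_inter.1 ha).1, sub_self]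
    rwa [Submodule.mem_toAffineSubspace, Submodule.mem_bot] at hmem
  have hfg : ∀ y ∈ affLat B, f (g y) = y := by
    intro y hy
    have hker := hLB y hy
    rw [hL, LinearMap.sub_apply, LinearMap.comp_apply, sub_eq_zero, ← hgR, piR_toR] at hker
    have hsnd : π (g y) = fun j => y (Fin.natAdd n j) := by
      apply toR_inj
      rw [hker]
      rfl
    funext i
    refine Fin.addCases (fun j => ?_) (fun j => ?_) i
    · show Fin.append (g y) (π (g y)) (Fin.castAdd k j) = y (Fin.castAdd k j)
      rw [Fin.append_left]
    · show Fin.append (g y) (π (g y)) (Fin.natAdd n j) = y (Fin.natAdd n j)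
      rw [Fin.append_right, hsnd]
  -- affine map property
  have haff : ∀ x y z : ZLat n, f (x + y - z) = f x + f y - f z := by
    intro x y z
    show Fin.append (x + y - z) (π (x + y - z)) =
      Fin.append x (π x) + Fin.append y (π y) - Fin.append z (π z)
    rw [map_sub, map_add]
    funext i
    refine Fin.addCases (fun j => ?_) (fun j => ?_) i <;>
      simp [Fin.append_left, Fin.append_right]
  -- image condition
  have himg : f '' (G : Set (ZLat n)) = (B : Set (ZLat (n + k))) := by
    ext b
    constructor
    · rintro ⟨a, ha, rfl⟩
      exact hfB a ha
    · intro hb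
      obtain ⟨i, a, ha, rfl⟩ := hBmem b hb
      refine ⟨a, (Finset.mem_inter.1 ha).2, ?_⟩
      show Fin.append a (π a) = _
      rw [hπval i a (Finset.mem_inter.1 ha).1]
  exact ⟨f, g, hcond1, hcond2, fun x _ => hgf x, hfg, fun x y z _ _ _ => haff x y z, himg⟩
end

section
/- Let π : ℤ^n → ℤ^m be a lattice projection, extended to a surjective linear map ℝ^n → ℝ^m, and let P ⊆ ℝ^n be a full-dimensional lattice polytope. Then the codegree cannot increase under the projection: codeg(π(P)) ≤ codeg(P). -/
open scoped Pointwise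

/-- The real extension of the lattice projection `π`. -/
noncomputable def extR {n m : ℕ} (π : ZLat n →+ ZLat m) : (Fin n → ℝ) →ₗ[ℝ] (Fin m → ℝ) :=
  Matrix.mulVecLin (Matrix.of fun j i => ((π (fun k => if i = k then 1 else 0)) j : ℝ))

lemma extR_toR {n m : ℕ} (π : ZLat n →+ ZLat m) (v : ZLat n) :
    extR π (toR v) = toR (π v) := by
  have hv : v = ∑ i, v i • fun j => if i = j then (1:ℤ) else 0 := pi_eq_sum_univ v
  funext j
  have : π v = ∑ i, v i • π (fun k => if i = k then 1 else 0) := by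
    conv_lhs => rw [hv]
    rw [map_sum]
    exact Finset.sum_congr rfl fun i _ => (map_zsmul π _ _)
  simp only [toR, this, extR, Matrix.mulVecLin_apply, Matrix.mulVec, dotProduct,
    Finset.sum_apply, Pi.smul_apply, smul_eq_mul]
  push_cast
  exact Finset.sum_congr rfl fun i _ => by simp [Matrix.of_apply, mul_comm]

lemma extR_surj {n m : ℕ} (π : ZLat n →+ ZLat m) (hπ : Function.Surjective π) :
    Function.Surjective (extR π) := by
  rw [← LinearMap.range_eq_top]
  rw [Submodule.eq_top_iff']
  intro x
  rw [pi_eq_sum_univ x]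
  refine Submodule.sum_mem _ fun j _ => Submodule.smul_mem _ _ ?_
  obtain ⟨w, hw⟩ := hπ (fun k => if j = k then 1 else 0)
  refine ⟨toR w, ?_⟩
  rw [extR_toR, hw]
  funext k
  simp [toR]

lemma extR_isOpenMap {n m : ℕ} (π : ZLat n →+ ZLat m) (hπ : Function.Surjective π) :
    IsOpenMap (extR π) :=
  ContinuousLinearMap.isOpenMap (LinearMap.toContinuousLinearMap (extR π)) (extR_surj π hπ)

lemma hasIntLatPtDilate_image {n m c : ℕ} (π : ZLat n →+ ZLat m) (hπ : Function.Surjective π)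
    (V : Finset (ZLat n)) (h : HasIntLatPtDilate c V) : HasIntLatPtDilate c (V.image π) := by
  obtain ⟨x, hx⟩ := h
  refine ⟨π x, ?_⟩
  have himg : extR π '' ((c:ℝ) • convexHull ℝ (toR '' (V : Set (ZLat n)))) =
      (c:ℝ) • convexHull ℝ (toR '' ((V.image π : Finset (ZLat m)) : Set (ZLat m))) := by
    rw [image_smul_set, LinearMap.image_convexHull, Finset.coe_image,
      Set.image_image, Set.image_image]
    simp only [extR_toR]
  have : toR (π x) ∈ extR π '' interior ((c:ℝ) • convexHull ℝ (toR '' (V : Set (ZLat n)))) :=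
    ⟨toR x, hx, extR_toR π x⟩
  have := (extR_isOpenMap π hπ).image_interior_subset _ this
  rwa [himg] at this

lemma codeg_set_nonempty {n : ℕ} (V : Finset (ZLat n)) (hne : V.Nonempty) (hV : confDim V = n) :
    {c : ℕ | 1 ≤ c ∧ HasIntLatPtDilate c V}.Nonempty := by
  set S := convexHull ℝ (toR '' (V : Set (ZLat n))) with hS
  have hspan : affineSpan ℝ (toR '' (V : Set (ZLat n))) = ⊤ := by
    have hnev : ((affineSpan ℝ (toR '' (V : Set (ZLat n)))) : Set (Fin n → ℝ)).Nonempty := by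
      obtain ⟨v, hv⟩ := hne
      exact ⟨toR v, subset_affineSpan ℝ _ ⟨v, hv, rfl⟩⟩
    rw [← AffineSubspace.direction_eq_top_iff_of_nonempty hnev]
    apply Submodule.eq_top_of_finrank_eq
    exact hV.trans (Module.finrank_fin_fun ℝ).symm
  have hint : (interior S).Nonempty := by
    rw [hS, interior_convexHull_nonempty_iff_affineSpan_eq_top]
    exact hspan
  have hdense : Dense (Set.pi Set.univ fun _ : Fin n => Set.range ((↑) : ℚ → ℝ)) :=
    dense_pi Set.univ fun i _ => Rat.denseRange_cast
  obtain ⟨x, hxD, hxI⟩ := hdense.exists_mem_open isOpen_interior hint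
  choose q hq using fun i => hxD i (Set.mem_univ i)
  set c : ℕ := ∏ i, (q i).den with hc
  have hc0 : c ≠ 0 := by
    rw [hc]
    exact Finset.prod_ne_zero_iff.mpr fun i _ => (q i).den_nz
  have hz : ∀ i, ∃ z : ℤ, (z : ℝ) = (c : ℝ) * x i := by
    intro i
    obtain ⟨t, ht⟩ : (q i).den ∣ c := Finset.dvd_prod_of_mem _ (Finset.mem_univ i)
    refine ⟨(q i).num * t, ?_⟩
    have hQ : (q i) * (c : ℚ) = (((q i).num * t : ℤ) : ℚ) := by
      rw [ht]
      push_cast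
      rw [← mul_assoc, Rat.mul_den_eq_num]
    have := congrArg (fun r : ℚ => (r : ℝ)) hQ
    push_cast at this
    rw [hq i] at this
    push_cast
    rw [← this]
    ring
  choose z hzz using hz
  refine ⟨c, Nat.one_le_iff_ne_zero.mpr hc0, z, ?_⟩
  have hxz : toR z = (c : ℝ) • x := by
    funext i
    simp [toR, hzz i]
  rw [hxz, interior_smul₀ (by exact_mod_cast hc0) S]
  exact ⟨x, hxI, rfl⟩

/-- Let `π : ℤ^n → ℤ^m` be a lattice projection and `P = conv(V)`
a full-dimensional lattice polytope in `ℝ^n`. Then the codegree cannot increase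
under the projection: `codeg(π(P)) ≤ codeg(P)`. -/
theorem codeg_image_le {n m : ℕ} (π : ZLat n →+ ZLat m)
    (hπ : Function.Surjective π) (V : Finset (ZLat n)) (hV : confDim V = n) :
    codeg (V.image π) ≤ codeg V := by
  rcases V.eq_empty_or_nonempty with h | hne
  · subst h
    rw [Finset.image_empty]
    have hzero : ∀ k : ℕ, codeg (∅ : Finset (ZLat k)) = 0 := by
      intro k
      unfold codeg
      convert Nat.sInf_empty using 2
      ext c
      simp [HasIntLatPtDilate]
    rw [hzero, hzero]
  · have hmem : codeg V ∈ {c : ℕ | 1 ≤ c ∧ HasIntLatPtDilate c V} :=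
      Nat.sInf_mem (codeg_set_nonempty V hne hV)
    exact Nat.sInf_le ⟨hmem.1, hasIntLatPtDilate_image π hπ V hmem.2⟩
end
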